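/- arXiv:1207.6698 — 2 statements merged into one kernel-verified Lean document; each statement's English description precedes it below -/
import Mathlib

section
/- Let 𝔠 ∈ J₀ be comparable. If A ∈ J₀ and A ⊊ 𝔠 (A is a proper subset of 𝔠), then g(A) ⊆ 𝔠. -/
/-- A subset `J` of `Z` is a tower if `∅ ∈ J`, `J` is closed under `g`, and
the union of any chain (under inclusion) of elements of `J` belongs to `J`. -/
def IsTower {X : Type*} (Z : Set (Set X)) (g : Set X → Set X)
    (J : Set (Set X)) : Prop :=
  J ⊆ Z ∧ (∅ : Set X) ∈ J ∧ (∀ A ∈ J, g A ∈ J) ∧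
    ∀ 𝒞 : Set (Set X), 𝒞 ⊆ J → IsChain (· ⊆ ·) 𝒞 → ⋃₀ 𝒞 ∈ J

theorem Set.subset_of_ssubset_of_diff_subsingleton {X : Type*} {A B C : Set X}
    (hAC : A ⊂ C) (hCB : C ⊆ B) (hBA : (B \ A).Subsingleton) : B ⊆ C := by
  obtain ⟨x, hxC, hxA⟩ := Set.exists_of_ssubset hAC
  intro y hyB
  by_cases hyA : y ∈ A
  · exact hAC.1 hyA
  · rw [hBA ⟨hyB, hyA⟩ ⟨hCB hxC, hxA⟩]
    exact hxC

theorem isTower_self {X : Type*} {Z : Set (Set X)} {g : Set X → Set X}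
    (hempty : (∅ : Set X) ∈ Z) (hgZ : ∀ A ∈ Z, g A ∈ Z)
    (hchain : ∀ 𝒞 : Set (Set X), 𝒞 ⊆ Z → IsChain (· ⊆ ·) 𝒞 → ⋃₀ 𝒞 ∈ Z) :
    IsTower Z g Z :=
  ⟨subset_rfl, hempty, hgZ, hchain⟩

theorem map_mem_sInter_isTower {X : Type*} {Z : Set (Set X)} {g : Set X → Set X}
    {A : Set X} (hA : A ∈ ⋂₀ {J | IsTower Z g J}) : g A ∈ ⋂₀ {J | IsTower Z g J} :=
  fun J hJ => hJ.2.2.1 A (hA J hJ)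

theorem g_subset_of_ssubset_comparable_general {X : Type*} (Z : Set (Set X))
    (h1 : (∅ : Set X) ∈ Z)
    (h3 : ∀ 𝒞 : Set (Set X), 𝒞 ⊆ Z → IsChain (· ⊆ ·) 𝒞 → ⋃₀ 𝒞 ∈ Z)
    (g : Set X → Set X)
    (hg : ∀ A ∈ Z, g A ∈ Z ∧ A ⊆ g A ∧ (g A \ A).Subsingleton)
    (J₀ : Set (Set X)) (hJ₀ : J₀ = ⋂₀ {J : Set (Set X) | IsTower Z g J})
    (𝔠 : Set X) (hcomp : ∀ A ∈ J₀, A ⊆ 𝔠 ∨ 𝔠 ⊆ A)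
    (A : Set X) (hA : A ∈ J₀) (hss : A ⊂ 𝔠) :
    g A ⊆ 𝔠 := by
  subst hJ₀
  have hZ : IsTower Z g Z := isTower_self h1 (fun B hB => (hg B hB).1) h3
  have hAZ : A ∈ Z := Set.sInter_subset_of_mem hZ hA
  rcases hcomp (g A) (map_mem_sInter_isTower hA) with hgA | h𝔠gA
  · exact hgA
  · exact Set.subset_of_ssubset_of_diff_subsingleton hss h𝔠gA (hg A hAZ).2.2

/-- If `𝔠 ∈ J₀` is comparable and `A ∈ J₀` with `A ⊊ 𝔠`, then `g A ⊆ 𝔠`. -/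
theorem g_subset_of_ssubset_comparable {X : Type*} (Z : Set (Set X))
    (h1 : (∅ : Set X) ∈ Z)
    (h2 : ∀ A ∈ Z, ∀ B : Set X, B ⊆ A → B ∈ Z)
    (h3 : ∀ 𝒞 : Set (Set X), 𝒞 ⊆ Z → IsChain (· ⊆ ·) 𝒞 → ⋃₀ 𝒞 ∈ Z)
    (g : Set X → Set X)
    (hg : ∀ A ∈ Z, g A ∈ Z ∧ A ⊆ g A ∧ (g A \ A).Subsingleton)
    (J₀ : Set (Set X)) (hJ₀ : J₀ = ⋂₀ {J : Set (Set X) | IsTower Z g J})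
    (𝔠 : Set X) (h𝔠 : 𝔠 ∈ J₀) (hcomp : ∀ A ∈ J₀, A ⊆ 𝔠 ∨ 𝔠 ⊆ A)
    (A : Set X) (hA : A ∈ J₀) (hss : A ⊂ 𝔠) :
    g A ⊆ 𝔠 :=
  g_subset_of_ssubset_comparable_general Z h1 h3 g hg J₀ hJ₀ 𝔠 hcomp A hA hss
end

section
/- If 𝔠 ∈ J₀ is comparable, then g(𝔠) is comparable, i.e., for every A ∈ J₀, either A ⊆ g(𝔠) or g(𝔠) ⊆ A. -/
/-!
The proof is the tower argument of the Bourbaki–Witt theorem. The elements `A ∈ J₀` with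
`A ⊆ g 𝔠` or `g 𝔠 ⊆ A` contain those with `A ⊆ 𝔠` or `g 𝔠 ⊆ A`, and the latter form a tower,
hence exhaust `J₀`. The one step that is not bookkeeping is closure under `g`: if `A ⊊ 𝔠`
and `𝔠 ⊆ g A`, then `g A = 𝔠`, because `g A` has at most one point outside `A` and `𝔠`
already contains one.
-/

namespace Set

variable {X : Type*} {A B C D : Set X}

theorem subset_of_ssubset_of_subsingleton_diff (hAC : A ⊂ C) (hCB : C ⊆ B)
    (hBA : (B \ A).Subsingleton) : B ⊆ C := by
  obtain ⟨x, hxC, hxA⟩ := exists_of_ssubset hAC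
  intro y hyB
  by_cases hyA : y ∈ A
  · exact hAC.subset hyA
  · rw [hBA ⟨hyB, hyA⟩ ⟨hCB hxC, hxA⟩]
    exact hxC

theorem sUnion_subset_or_subset_sUnion {𝒞 : Set (Set X)}
    (h : ∀ A ∈ 𝒞, A ⊆ C ∨ D ⊆ A) : ⋃₀ 𝒞 ⊆ C ∨ D ⊆ ⋃₀ 𝒞 :=
  or_iff_not_imp_right.2 fun hD => sUnion_subset fun A hA =>
    (h A hA).resolve_right fun hDA => hD (hDA.trans (subset_sUnion_of_mem hA))

end Set

namespace IsTower

variable {X : Type*} {Z : Set (Set X)} {g : Set X → Set X}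

theorem self (h1 : (∅ : Set X) ∈ Z) (hgZ : ∀ A ∈ Z, g A ∈ Z)
    (h3 : ∀ 𝒞 : Set (Set X), 𝒞 ⊆ Z → IsChain (· ⊆ ·) 𝒞 → ⋃₀ 𝒞 ∈ Z) :
    IsTower Z g Z :=
  ⟨subset_rfl, h1, hgZ, h3⟩

theorem sInter {𝒯 : Set (Set (Set X))} (hne : 𝒯.Nonempty) (h𝒯 : ∀ J ∈ 𝒯, IsTower Z g J) :
    IsTower Z g (⋂₀ 𝒯) := by
  obtain ⟨J₁, hJ₁⟩ := hne
  refine ⟨(Set.sInter_subset_of_mem hJ₁).trans (h𝒯 J₁ hJ₁).1,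
    fun J hJ => (h𝒯 J hJ).2.1, ?_, ?_⟩
  · exact fun A hA J hJ => (h𝒯 J hJ).2.2.1 A (hA J hJ)
  · exact fun 𝒞 h𝒞 hchain J hJ =>
      (h𝒯 J hJ).2.2.2 𝒞 (fun A hA => h𝒞 hA J hJ) hchain

theorem sep_subset_or_subset {J : Set (Set X)} (hJ : IsTower Z g J)
    (hext : ∀ A ∈ J, A ⊆ g A ∧ (g A \ A).Subsingleton) {c : Set X}
    (hcomp : ∀ A ∈ J, A ⊆ c ∨ c ⊆ A) :
    IsTower Z g {A ∈ J | A ⊆ c ∨ g c ⊆ A} := by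
  refine ⟨fun A hA => hJ.1 hA.1, ⟨hJ.2.1, Or.inl (Set.empty_subset c)⟩, ?_, ?_⟩
  · rintro A ⟨hAJ, hAc | hgcA⟩
    · have hgAJ := hJ.2.2.1 A hAJ
      refine ⟨hgAJ, ?_⟩
      rcases hcomp (g A) hgAJ with hgAc | hcgA
      · exact Or.inl hgAc
      rcases hAc.eq_or_ssubset with rfl | hAc
      · exact Or.inr subset_rfl
      · exact Or.inl (Set.subset_of_ssubset_of_subsingleton_diff hAc hcgA (hext A hAJ).2)
    · exact ⟨hJ.2.2.1 A hAJ, Or.inr (hgcA.trans (hext A hAJ).1)⟩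
  · intro 𝒞 h𝒞 hchain
    exact ⟨hJ.2.2.2 𝒞 (fun A hA => (h𝒞 hA).1) hchain,
      Set.sUnion_subset_or_subset_sUnion fun A hA => (h𝒞 hA).2⟩

end IsTower

theorem g_comparable_general {X : Type*} (Z : Set (Set X))
    (h1 : (∅ : Set X) ∈ Z)
    (h3 : ∀ 𝒞 : Set (Set X), 𝒞 ⊆ Z → IsChain (· ⊆ ·) 𝒞 → ⋃₀ 𝒞 ∈ Z)
    (g : Set X → Set X)
    (hg : ∀ A ∈ Z, g A ∈ Z ∧ A ⊆ g A ∧ (g A \ A).Subsingleton)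
    (J₀ : Set (Set X)) (hJ₀ : J₀ = ⋂₀ {J : Set (Set X) | IsTower Z g J})
    (𝔠 : Set X) (h𝔠 : 𝔠 ∈ J₀) (hcomp : ∀ A ∈ J₀, A ⊆ 𝔠 ∨ 𝔠 ⊆ A) :
    ∀ A ∈ J₀, A ⊆ g 𝔠 ∨ g 𝔠 ⊆ A := by
  have hZ : IsTower Z g Z := IsTower.self h1 (fun A hA => (hg A hA).1) h3
  have hJ₀tower : IsTower Z g J₀ := hJ₀ ▸ IsTower.sInter ⟨Z, hZ⟩ fun _ hJ => hJ
  have hext : ∀ A ∈ J₀, A ⊆ g A ∧ (g A \ A).Subsingleton :=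
    fun A hA => (hg A (hJ₀tower.1 hA)).2
  have hmin : ∀ J, IsTower Z g J → J₀ ⊆ J := fun J hJ => hJ₀ ▸ Set.sInter_subset_of_mem hJ
  have hsep : J₀ ⊆ {A ∈ J₀ | A ⊆ 𝔠 ∨ g 𝔠 ⊆ A} :=
    hmin _ (hJ₀tower.sep_subset_or_subset hext hcomp)
  intro A hA
  exact (hsep hA).2.imp_left fun hA𝔠 => hA𝔠.trans (hext 𝔠 h𝔠).1

/-- If `𝔠 ∈ J₀` is comparable, then `g 𝔠` is comparable. -/
theorem g_comparable {X : Type*} (Z : Set (Set X))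
    (h1 : (∅ : Set X) ∈ Z)
    (h2 : ∀ A ∈ Z, ∀ B : Set X, B ⊆ A → B ∈ Z)
    (h3 : ∀ 𝒞 : Set (Set X), 𝒞 ⊆ Z → IsChain (· ⊆ ·) 𝒞 → ⋃₀ 𝒞 ∈ Z)
    (g : Set X → Set X)
    (hg : ∀ A ∈ Z, g A ∈ Z ∧ A ⊆ g A ∧ (g A \ A).Subsingleton)
    (J₀ : Set (Set X)) (hJ₀ : J₀ = ⋂₀ {J : Set (Set X) | IsTower Z g J})
    (𝔠 : Set X) (h𝔠 : 𝔠 ∈ J₀) (hcomp : ∀ A ∈ J₀, A ⊆ 𝔠 ∨ 𝔠 ⊆ A) :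
    ∀ A ∈ J₀, A ⊆ g 𝔠 ∨ g 𝔠 ⊆ A :=
  g_comparable_general Z h1 h3 g hg J₀ hJ₀ 𝔠 h𝔠 hcomp
end
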